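/- Monotone likelihood ratio in the index: for p ∈ (0,1)^k and 1 ≤ i ≤ k−1, the Poisson binomial probabilities satisfy f_{k,i}(p)/f_{k,i−1}(p) > f_{k,i+1}(p)/f_{k,i}(p). -/

import Mathlib

/-!
Multiplying a polynomial whose coefficients are positive on `[0, n]`, zero beyond, and strictly
log-concave there by a linear factor `q + p X` with `p, q > 0` gives a polynomial of the same
kind: the new gap `b (i+1)^2 - b i * b (i+2)` is a positive combination of three gaps of the old
coefficients. The `f_{k,i}(p)` are the coefficients of `∏ⱼ ((1-pⱼ) + pⱼ X)`, so induction on the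
factors gives `f_{k,i-1} f_{k,i+1} < f_{k,i}^2`, which is the claim.
-/

open Finset Polynomial

structure StrictLogConcave (a : ℕ → ℝ) (n : ℕ) : Prop where
  pos : ∀ i ≤ n, 0 < a i
  eq_zero : ∀ i, n < i → a i = 0
  mul_lt_sq : ∀ i, i + 2 ≤ n → a i * a (i + 2) < a (i + 1) ^ 2

namespace StrictLogConcave

variable {a : ℕ → ℝ} {n : ℕ}

theorem nonneg (h : StrictLogConcave a n) (i : ℕ) : 0 ≤ a i := by
  rcases le_or_gt i n with hi | hi
  · exact (h.pos i hi).le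
  · exact (h.eq_zero i hi).ge

theorem mul_le_sq (h : StrictLogConcave a n) (i : ℕ) : a i * a (i + 2) ≤ a (i + 1) ^ 2 := by
  rcases le_or_gt (i + 2) n with hi | hi
  · exact (h.mul_lt_sq i hi).le
  · rw [h.eq_zero _ hi, mul_zero]
    positivity

theorem mul_le_mul (h : StrictLogConcave a n) (i : ℕ) :
    a i * a (i + 3) ≤ a (i + 1) * a (i + 2) := by
  rcases le_or_gt (i + 3) n with hi | hi
  · have h₁ := h.pos (i + 1) (by omega)
    have h₂ := h.pos (i + 2) (by omega)
    have := _root_.mul_le_mul (h.mul_le_sq i) (h.mul_le_sq (i + 1))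
      (mul_nonneg (h.nonneg _) (h.nonneg _)) (sq_nonneg _)
    refine le_of_mul_le_mul_right ?_ (mul_pos h₁ h₂)
    nlinarith
  · rw [h.eq_zero _ hi, mul_zero]
    exact mul_nonneg (h.nonneg _) (h.nonneg _)

end StrictLogConcave

theorem coeff_linear_mul_zero (p q : ℝ) (P : ℝ[X]) :
    ((C q + C p * X) * P).coeff 0 = q * P.coeff 0 := by
  simp [add_mul, mul_assoc]

theorem coeff_linear_mul_succ (p q : ℝ) (P : ℝ[X]) (i : ℕ) :
    ((C q + C p * X) * P).coeff (i + 1) = q * P.coeff (i + 1) + p * P.coeff i := by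
  rw [add_mul, mul_assoc, coeff_add, coeff_C_mul, coeff_C_mul, coeff_X_mul]

theorem StrictLogConcave.linear_mul {P : ℝ[X]} {n : ℕ} (h : StrictLogConcave P.coeff n)
    {p q : ℝ} (hp : 0 < p) (hq : 0 < q) :
    StrictLogConcave ((C q + C p * X) * P).coeff (n + 1) where
  pos i hi := by
    rcases i with _ | i
    · rw [coeff_linear_mul_zero]
      exact mul_pos hq (h.pos 0 (Nat.zero_le n))
    · rw [coeff_linear_mul_succ]
      nlinarith [h.nonneg (i + 1), h.pos i (by omega)]
  eq_zero i hi := by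
    obtain ⟨i, rfl⟩ : ∃ j, i = j + 1 := ⟨i - 1, by omega⟩
    rw [coeff_linear_mul_succ, h.eq_zero i (by omega), h.eq_zero (i + 1) (by omega)]
    ring
  mul_lt_sq i hi := by
    rcases i with _ | i
    · rw [coeff_linear_mul_zero, coeff_linear_mul_succ, coeff_linear_mul_succ]
      have h₀ := h.pos 0 (Nat.zero_le n)
      nlinarith [mul_le_mul_of_nonneg_left (h.mul_le_sq 0) (mul_pos hq hq).le,
        mul_nonneg (mul_pos hp hq).le (mul_nonneg h₀.le (h.nonneg 1)),
        mul_pos (mul_pos hp hp) (mul_pos h₀ h₀)]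
    · simp only [coeff_linear_mul_succ]
      -- the new gap is `q²·(gap at i+1) + pq·(cross gap at i) + p²·(gap at i)`, the last strict
      nlinarith [mul_le_mul_of_nonneg_left (h.mul_le_sq (i + 1)) (mul_pos hq hq).le,
        mul_le_mul_of_nonneg_left (h.mul_le_mul i) (mul_pos hp hq).le,
        mul_lt_mul_of_pos_left (h.mul_lt_sq i (by omega)) (mul_pos hp hp)]

theorem strictLogConcave_one : StrictLogConcave (1 : ℝ[X]).coeff 0 where
  pos i hi := by simp [Nat.le_zero.mp hi]
  eq_zero i hi := by simp [coeff_one, hi.ne']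
  mul_lt_sq i hi := by omega

theorem strictLogConcave_prod_linear {ι : Type*} (s : Finset ι) {p q : ι → ℝ}
    (hp : ∀ j ∈ s, 0 < p j) (hq : ∀ j ∈ s, 0 < q j) :
    StrictLogConcave (∏ j ∈ s, (C (q j) + C (p j) * X)).coeff s.card := by
  classical
  induction s using Finset.induction_on with
  | empty => simpa using strictLogConcave_one
  | insert a s ha ih =>
    rw [prod_insert ha, card_insert_of_notMem ha]
    have hs := ih (fun j hj => hp j (mem_insert_of_mem hj)) fun j hj => hq j (mem_insert_of_mem hj)
    exact hs.linear_mul (hp a (mem_insert_self a s)) (hq a (mem_insert_self a s))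

/-- The Poisson binomial probability `f_{k,i}(p)`: the coefficient of `z^i` in
`∏ⱼ ((1-pⱼ) + pⱼ z)`. -/
def poissonBinomial (k : ℕ) (p : Fin k → ℝ) (i : ℕ) : ℝ :=
  ∑ S ∈ Finset.powersetCard i (Finset.univ : Finset (Fin k)),
    (∏ j ∈ S, p j) * ∏ j ∈ Sᶜ, (1 - p j)

theorem poissonBinomial_eq_coeff (k : ℕ) (p : Fin k → ℝ) (i : ℕ) :
    poissonBinomial k p i = (∏ j, (C (1 - p j) + C (p j) * X)).coeff i := by
  have term : ∀ S : Finset (Fin k), (∏ j ∈ S, C (p j) * X) * ∏ j ∈ univ \ S, C (1 - p j) =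
      C ((∏ j ∈ S, p j) * ∏ j ∈ Sᶜ, (1 - p j)) * X ^ S.card := by
    intro S
    rw [prod_mul_distrib, prod_const, ← map_prod, ← map_prod, compl_eq_univ_sdiff, C_mul]
    ring
  simp_rw [add_comm (C _), prod_add, finsetSum_coeff, term, coeff_C_mul_X_pow, eq_comm (a := i),
    ← sum_filter, ← powersetCard_eq_filter]
  rfl

/-- monotone likelihood ratio in the index: for `p ∈ (0,1)^k` and
`1 ≤ i ≤ k-1`, `f_{k,i}(p)/f_{k,i-1}(p) > f_{k,i+1}(p)/f_{k,i}(p)`. -/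
theorem stmt16 (k i : ℕ) (h1 : 1 ≤ i) (h2 : i < k) (p : Fin k → ℝ)
    (hp : ∀ l, p l ∈ Set.Ioo (0 : ℝ) 1) :
    poissonBinomial k p (i + 1) / poissonBinomial k p i <
      poissonBinomial k p i / poissonBinomial k p (i - 1) := by
  obtain ⟨m, rfl⟩ : ∃ m, i = m + 1 := ⟨i - 1, by omega⟩
  have h := strictLogConcave_prod_linear (univ : Finset (Fin k)) (p := p) (q := fun j => 1 - p j)
    (fun j _ => (hp j).1) fun j _ => sub_pos.2 (hp j).2
  rw [card_univ, Fintype.card_fin] at h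
  simp only [poissonBinomial_eq_coeff, Nat.add_sub_cancel]
  rw [div_lt_div_iff₀ (h.pos _ (by omega)) (h.pos _ (by omega))]
  nlinarith [h.mul_lt_sq m (by omega)]
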